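/- Let β ∈ [1/2, 1], v ∈ ℝ, and let (h_n)_{n≥0} be a real sequence such that |h_n| ≤ C (n+1)^{−β} for some C > 0 and all n, and the sequence ( h_n − v (n+1)^{−β} )_{n≥0} belongs to ℓ²_{β−1/4}. Then for each n the series Σ_{m≥0, m≠n} h_m/(n−m)² converges absolutely, and the sequence ( Σ_{m≥0, m≠n} h_m/(n−m)² − (π² v/3)·(n+1)^{−β} )_{n≥0} belongs to ℓ²_{β−1/4}. -/

import Mathlib

open scoped BigOperators

/-- Membership in the weighted space `ℓ²_r`: `Σ (1+n)^{2r} c_n² < ∞`. -/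
def MemL2r (r : ℝ) (c : ℕ → ℝ) : Prop :=
  Summable (fun n : ℕ => (1 + (n : ℝ)) ^ (2 * r) * (c n) ^ 2)

noncomputable def Jr (q : ℝ) (n m : ℕ) : ℝ := if m = n then 0 else |(n : ℝ) - m| ^ (-q)

noncomputable def Kd (n m : ℕ) : ℝ := if m = n then 0 else (((n : ℝ) - m) ^ 2)⁻¹

lemma Jr_nonneg (q : ℝ) (n m : ℕ) : 0 ≤ Jr q n m := by
  unfold Jr; split
  · exact le_refl 0
  · exact Real.rpow_nonneg (abs_nonneg _) _

lemma Kd_nonneg (n m : ℕ) : 0 ≤ Kd n m := by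
  unfold Kd; split
  · exact le_refl 0
  · positivity

lemma one_le_abs_sub {n m : ℕ} (h : m ≠ n) : 1 ≤ |(n : ℝ) - m| := by
  have h1 : (1 : ℤ) ≤ |(n : ℤ) - (m : ℤ)| := by
    rcases lt_or_gt_of_ne (fun hnm : (n:ℤ) = m => h (by exact_mod_cast hnm.symm)) with hlt | hgt
    · rw [abs_of_neg (by omega)]; omega
    · rw [abs_of_pos (by omega)]; omega
  have h2 : ((1 : ℤ) : ℝ) ≤ ((|(n : ℤ) - (m : ℤ)| : ℤ) : ℝ) := Int.cast_le.mpr h1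
  push_cast at h2
  exact h2

lemma Kd_eq_Jr (n m : ℕ) : Kd n m = Jr 2 n m := by
  unfold Kd Jr
  split
  · rfl
  · rw [Real.rpow_neg (abs_nonneg _), show ((2:ℝ)) = ((2:ℕ):ℝ) by norm_num,
      Real.rpow_natCast, sq_abs]

lemma Jr_symm (q : ℝ) (n m : ℕ) : Jr q n m = Jr q m n := by
  unfold Jr
  by_cases h : m = n
  · subst h; simp
  · rw [if_neg h, if_neg (Ne.symm h), abs_sub_comm]

lemma summable_shift (q : ℝ) (hq : 1 < q) : Summable (fun k : ℕ => ((k : ℝ) + 1) ^ (-q)) := by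
  have h0 : Summable (fun n : ℕ => (n : ℝ) ^ (-q)) := Real.summable_nat_rpow.mpr (by linarith)
  have := (summable_nat_add_iff 1).mpr h0
  refine this.congr fun k => ?_
  push_cast
  ring_nf

lemma Jr_summable (q : ℝ) (hq : 1 < q) (n : ℕ) : Summable (fun m => Jr q n m) := by
  rw [← summable_nat_add_iff (n + 1)]
  refine (summable_shift q hq).congr fun m => ?_
  unfold Jr
  rw [if_neg (by omega)]
  congr 1
  push_cast
  rw [abs_sub_comm, abs_of_nonneg (by linarith [Nat.cast_nonneg (α := ℝ) m])]
  ring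

lemma Jr_tsum_le (q : ℝ) (hq : 1 < q) (n : ℕ) :
    ∑' m, Jr q n m ≤ 2 * ∑' k : ℕ, ((k : ℝ) + 1) ^ (-q) := by
  have hs := Jr_summable q hq n
  have hsh := summable_shift q hq
  rw [← Summable.sum_add_tsum_nat_add (n + 1) hs]
  have hback : (∑' m : ℕ, Jr q n (m + (n + 1))) = ∑' k : ℕ, ((k : ℝ) + 1) ^ (-q) := by
    refine tsum_congr fun m => ?_
    unfold Jr
    rw [if_neg (by omega)]
    congr 1
    push_cast
    rw [abs_sub_comm, abs_of_nonneg (by linarith [Nat.cast_nonneg (α := ℝ) m])]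
    ring
  have hfront : (∑ i ∈ Finset.range (n + 1), Jr q n i) ≤ ∑' k : ℕ, ((k : ℝ) + 1) ^ (-q) := by
    rw [Finset.sum_range_succ, show Jr q n n = 0 by unfold Jr; rw [if_pos rfl], add_zero]
    have hrefl := Finset.sum_range_reflect (fun i => Jr q n i) n
    rw [← hrefl]
    have heq : ∀ i ∈ Finset.range n, Jr q n (n - 1 - i) = ((i : ℝ) + 1) ^ (-q) := by
      intro i hi
      have hi' : i < n := Finset.mem_range.mp hi
      unfold Jr
      rw [if_neg (by omega)]
      congr 1
      have hcast : ((n - 1 - i : ℕ) : ℝ) = (n : ℝ) - 1 - i := by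
        have : (n : ℤ) - 1 - i = ((n - 1 - i : ℕ) : ℤ) := by omega
        exact_mod_cast this.symm
      rw [hcast, abs_of_nonneg (by linarith)]
      ring
    rw [Finset.sum_congr rfl heq]
    exact Summable.sum_le_tsum _ (fun k _ => Real.rpow_nonneg (by positivity) _) hsh
  linarith [hback ▸ le_refl (∑' m : ℕ, Jr q n (m + (n + 1))),
    hback, hfront]

open Real in
lemma basel' : HasSum (fun k : ℕ => (((k : ℝ) + 1) ^ 2)⁻¹) (π ^ 2 / 6) := by
  have h0 := hasSum_zeta_two
  have h1 : HasSum (fun n : ℕ => (1 : ℝ) / ((n + 1 : ℕ) : ℝ) ^ 2) (π ^ 2 / 6) := by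
    refine (hasSum_nat_add_iff (f := fun n : ℕ => (1 : ℝ) / (n : ℝ) ^ 2) (g := π ^ 2 / 6) 1).mpr ?_
    simpa using h0
  refine h1.congr_fun fun k => ?_
  push_cast
  rw [one_div]

lemma tsum_CS {L u : ℕ → ℝ} (hL : ∀ m, 0 ≤ L m) (hu : ∀ m, 0 ≤ u m)
    (hLs : Summable L) (hLu2 : Summable (fun m => L m * u m ^ 2)) :
    Summable (fun m => L m * u m) ∧
      (∑' m, L m * u m) ^ 2 ≤ (∑' m, L m) * ∑' m, L m * u m ^ 2 := by
  have hsum : Summable (fun m => L m * u m) := by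
    refine Summable.of_nonneg_of_le (fun m => mul_nonneg (hL m) (hu m)) (fun m => ?_)
      ((hLs.add hLu2).div_const 2)
    have := mul_nonneg (hL m) (sq_nonneg (u m - 1))
    nlinarith
  refine ⟨hsum, ?_⟩
  set P := (∑' m, L m) * ∑' m, L m * u m ^ 2 with hP
  have hP0 : 0 ≤ P :=
    mul_nonneg (tsum_nonneg hL) (tsum_nonneg fun m => mul_nonneg (hL m) (sq_nonneg _))
  have key : ∀ s : Finset ℕ, (∑ m ∈ s, L m * u m) ≤ Real.sqrt P := by
    intro s
    have h1 : (∑ m ∈ s, L m * u m) ^ 2 ≤ (∑ m ∈ s, L m) * ∑ m ∈ s, L m * u m ^ 2 := by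
      have hcs := Finset.sum_mul_sq_le_sq_mul_sq s (fun m => Real.sqrt (L m))
        (fun m => Real.sqrt (L m) * u m)
      have e1 : ∀ m, Real.sqrt (L m) * (Real.sqrt (L m) * u m) = L m * u m := fun m => by
        rw [← mul_assoc, Real.mul_self_sqrt (hL m)]
      have e2 : ∀ m, Real.sqrt (L m) ^ 2 = L m := fun m => Real.sq_sqrt (hL m)
      have e3 : ∀ m, (Real.sqrt (L m) * u m) ^ 2 = L m * u m ^ 2 := fun m => by
        rw [mul_pow, Real.sq_sqrt (hL m)]
      calc (∑ m ∈ s, L m * u m) ^ 2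
          = (∑ m ∈ s, Real.sqrt (L m) * (Real.sqrt (L m) * u m)) ^ 2 := by
            rw [Finset.sum_congr rfl fun m _ => (e1 m).symm]
        _ ≤ (∑ m ∈ s, Real.sqrt (L m) ^ 2) * ∑ m ∈ s, (Real.sqrt (L m) * u m) ^ 2 := hcs
        _ = (∑ m ∈ s, L m) * ∑ m ∈ s, L m * u m ^ 2 := by
            rw [Finset.sum_congr rfl fun m _ => e2 m, Finset.sum_congr rfl fun m _ => e3 m]
    have h2 : (∑ m ∈ s, L m) * (∑ m ∈ s, L m * u m ^ 2) ≤ P := by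
      refine mul_le_mul (Summable.sum_le_tsum s (fun m _ => hL m) hLs)
        (Summable.sum_le_tsum s (fun m _ => mul_nonneg (hL m) (sq_nonneg _)) hLu2)
        (Finset.sum_nonneg fun m _ => mul_nonneg (hL m) (sq_nonneg _))
        (tsum_nonneg hL)
    have hs0 : 0 ≤ ∑ m ∈ s, L m * u m := Finset.sum_nonneg fun m _ => mul_nonneg (hL m) (hu m)
    rw [Real.le_sqrt hs0 hP0]
    exact h1.trans h2
  have h3 : (∑' m, L m * u m) ≤ Real.sqrt P := Summable.tsum_le_of_sum_le hsum key
  calc (∑' m, L m * u m) ^ 2 ≤ Real.sqrt P ^ 2 :=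
        pow_le_pow_left₀ (tsum_nonneg fun m => mul_nonneg (hL m) (hu m)) h3 2
    _ = P := Real.sq_sqrt hP0

lemma sum_inv_sqrt_le (N : ℕ) :
    (∑ m ∈ Finset.range N, ((m : ℝ) + 1) ^ (-(1/2 : ℝ))) ≤ 2 * Real.sqrt N := by
  induction N with
  | zero => simp
  | succ N ih =>
    rw [Finset.sum_range_succ]
    have hterm : ((N : ℝ) + 1) ^ (-(1/2 : ℝ)) = (Real.sqrt ((N : ℝ) + 1))⁻¹ := by
      rw [Real.rpow_neg (by positivity), Real.sqrt_eq_rpow]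
    have hN0 : (0 : ℝ) ≤ N := Nat.cast_nonneg N
    set s := Real.sqrt (N : ℝ) with hs
    set t := Real.sqrt ((N : ℝ) + 1) with ht
    have hs0 : 0 ≤ s := Real.sqrt_nonneg _
    have ht0 : 0 < t := Real.sqrt_pos.mpr (by linarith)
    have hst : s ≤ t := Real.sqrt_le_sqrt (by linarith)
    have hs2 : s ^ 2 = (N : ℝ) := Real.sq_sqrt hN0
    have ht2 : t ^ 2 = (N : ℝ) + 1 := Real.sq_sqrt (by linarith)
    have hkey : 2 * s + t⁻¹ ≤ 2 * t := by
      have hnum : 0 ≤ 2 * t ^ 2 - 2 * s * t - 1 := by nlinarith [sq_nonneg (t - s)]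
      have heq : 2 * t - (2 * s + t⁻¹) = (2 * t ^ 2 - 2 * s * t - 1) / t := by
        field_simp; ring
      have := div_nonneg hnum ht0.le
      linarith [heq ▸ this]
    have hcast : Real.sqrt ((N : ℝ) + 1) = Real.sqrt ((N + 1 : ℕ) : ℝ) := by push_cast; rfl
    calc (∑ m ∈ Finset.range N, ((m : ℝ) + 1) ^ (-(1/2 : ℝ))) + ((N : ℝ) + 1) ^ (-(1/2 : ℝ))
        ≤ 2 * s + t⁻¹ := by rw [hterm]; exact add_le_add ih (le_refl _)
      _ ≤ 2 * t := hkey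
      _ = 2 * Real.sqrt ((N + 1 : ℕ) : ℝ) := by rw [ht, hcast]

lemma rpow_lip {β a b : ℝ} (hβ1 : β ≤ 1) (hβ0 : 0 ≤ β) (ha : 1 ≤ a) (hab : a ≤ b) :
    a ^ (-β) - b ^ (-β) ≤ (b - a) * a ^ (-(β + 1)) := by
  have ha0 : (0 : ℝ) < a := lt_of_lt_of_le one_pos ha
  have hb0 : (0 : ℝ) < b := lt_of_lt_of_le ha0 hab
  have hx0 : 0 < a / b := div_pos ha0 hb0
  have hx1 : a / b ≤ 1 := (div_le_one hb0).mpr hab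
  have h1 : (a / b) ^ (1 : ℝ) ≤ (a / b) ^ β := Real.rpow_le_rpow_of_exponent_ge hx0 hx1 hβ1
  rw [Real.rpow_one] at h1
  have heq : a ^ (-β) * (a / b) ^ β = b ^ (-β) := by
    rw [Real.div_rpow ha0.le hb0.le, Real.rpow_neg ha0.le, Real.rpow_neg hb0.le]
    field_simp
  have hstep1 : a ^ (-β) - b ^ (-β) ≤ a ^ (-β) * (1 - a / b) := by
    rw [← heq, mul_one_sub]
    have h2 := mul_le_mul_of_nonneg_left h1 (Real.rpow_nonneg ha0.le (-β))
    linarith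
  have hstep2 : a ^ (-β) * (1 - a / b) ≤ (b - a) * a ^ (-(β + 1)) := by
    have e1 : 1 - a / b = (b - a) / b := by field_simp
    have e2 : (b - a) / b ≤ (b - a) / a := by
      apply div_le_div_of_nonneg_left (by linarith) ha0 hab  -- careful order
    have e3 : a ^ (-β) * ((b - a) / a) = (b - a) * a ^ (-(β + 1)) := by
      rw [show (-(β + 1)) = (-β) + (-1) by ring, Real.rpow_add ha0, Real.rpow_neg_one]
      field_simp
    calc a ^ (-β) * (1 - a / b) = a ^ (-β) * ((b - a) / b) := by rw [e1]
      _ ≤ a ^ (-β) * ((b - a) / a) :=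
          mul_le_mul_of_nonneg_left e2 (Real.rpow_nonneg ha0.le _)
      _ = (b - a) * a ^ (-(β + 1)) := e3
  linarith

lemma rpow_diff_aux {β a b : ℝ} (hβ1 : β ≤ 1) (hβ0 : 0 ≤ β) (ha : 1 ≤ a) (hab : a ≤ b) :
    a ^ (-β) - b ^ (-β) ≤ Real.sqrt (b - a) * a ^ (-(β + 1/2)) := by
  have ha0 : (0 : ℝ) < a := lt_of_lt_of_le one_pos ha
  have hba0 : (0 : ℝ) ≤ b - a := by linarith
  have hsqa : Real.sqrt a * a ^ (-(β + 1)) = a ^ (-(β + 1/2)) := by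
    rw [Real.sqrt_eq_rpow, ← Real.rpow_add ha0]
    congr 1; ring
  rcases le_total (b - a) a with hc | hc
  · have h1 := rpow_lip hβ1 hβ0 ha hab
    have h3 : Real.sqrt (b - a) ≤ Real.sqrt a := Real.sqrt_le_sqrt hc
    calc a ^ (-β) - b ^ (-β) ≤ (b - a) * a ^ (-(β + 1)) := h1
      _ = Real.sqrt (b - a) * Real.sqrt (b - a) * a ^ (-(β + 1)) := by
          rw [Real.mul_self_sqrt hba0]
      _ ≤ Real.sqrt (b - a) * Real.sqrt a * a ^ (-(β + 1)) := by
          apply mul_le_mul_of_nonneg_right _ (Real.rpow_nonneg ha0.le _)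
          exact mul_le_mul_of_nonneg_left h3 (Real.sqrt_nonneg _)
      _ = Real.sqrt (b - a) * a ^ (-(β + 1/2)) := by rw [mul_assoc, hsqa]
  · have h1 : a ^ (-β) - b ^ (-β) ≤ a ^ (-β) := by
      have := Real.rpow_nonneg (le_trans ha0.le hab) (-β)
      linarith
    have h2 : a ^ (-β) = Real.sqrt a * a ^ (-(β + 1/2)) := by
      rw [Real.sqrt_eq_rpow, ← Real.rpow_add ha0]
      congr 1; ring
    have h3 : Real.sqrt a ≤ Real.sqrt (b - a) := Real.sqrt_le_sqrt hc
    calc a ^ (-β) - b ^ (-β) ≤ a ^ (-β) := h1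
      _ = Real.sqrt a * a ^ (-(β + 1/2)) := h2
      _ ≤ Real.sqrt (b - a) * a ^ (-(β + 1/2)) :=
          mul_le_mul_of_nonneg_right h3 (Real.rpow_nonneg ha0.le _)

lemma rpow_diff_le {β a b : ℝ} (hβ1 : β ≤ 1) (hβ0 : 0 ≤ β) (ha : 1 ≤ a) (hb : 1 ≤ b) :
    |a ^ (-β) - b ^ (-β)| ≤ Real.sqrt |a - b| * (min a b) ^ (-(β + 1/2)) := by
  rcases le_total a b with hab | hab
  · have hd := rpow_diff_aux hβ1 hβ0 ha hab
    have hmono : b ^ (-β) ≤ a ^ (-β) :=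
      Real.rpow_le_rpow_of_nonpos (lt_of_lt_of_le one_pos ha) hab (by linarith)
    rw [abs_of_nonneg (by linarith), abs_of_nonpos (by linarith), min_eq_left hab]
    calc a ^ (-β) - b ^ (-β) ≤ Real.sqrt (b - a) * a ^ (-(β + 1/2)) := hd
      _ = Real.sqrt (-(a - b)) * a ^ (-(β + 1/2)) := by ring_nf
  · have hd := rpow_diff_aux hβ1 hβ0 hb hab
    have hmono : a ^ (-β) ≤ b ^ (-β) :=
      Real.rpow_le_rpow_of_nonpos (lt_of_lt_of_le one_pos hb) hab (by linarith)
    rw [abs_of_nonpos (by linarith), abs_of_nonneg (by linarith), min_eq_right hab]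
    calc -(a ^ (-β) - b ^ (-β)) = b ^ (-β) - a ^ (-β) := by ring
      _ ≤ Real.sqrt (a - b) * b ^ (-(β + 1/2)) := hd

lemma two_rpow_le_three {e : ℝ} (he : e ≤ 3/2) : (2 : ℝ) ^ e ≤ 3 := by
  have h1 : (2 : ℝ) ^ e ≤ (2 : ℝ) ^ (3/2 : ℝ) :=
    Real.rpow_le_rpow_of_exponent_le one_le_two he
  have h2 : (2 : ℝ) ^ (3/2 : ℝ) = 2 * Real.sqrt 2 := by
    rw [show (3/2 : ℝ) = 1 + 1/2 by norm_num, Real.rpow_add (by norm_num), Real.rpow_one,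
      Real.sqrt_eq_rpow]
  have h3 : Real.sqrt 2 ≤ 3/2 := by
    have := Real.sqrt_le_sqrt (show (2:ℝ) ≤ (3/2)^2 by norm_num)
    rwa [Real.sqrt_sq (by norm_num)] at this
  linarith

lemma memL2r_of_le {r : ℝ} {c d : ℕ → ℝ} (hcd : ∀ n, |c n| ≤ d n)
    (hd : Summable fun n : ℕ => (1 + (n : ℝ)) ^ (2 * r) * d n ^ 2) : MemL2r r c := by
  refine Summable.of_nonneg_of_le (fun n => ?_) (fun n => ?_) hd
  · positivity
  · apply mul_le_mul_of_nonneg_left _ (Real.rpow_nonneg (by positivity) _)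
    calc c n ^ 2 = |c n| ^ 2 := (sq_abs _).symm
      _ ≤ d n ^ 2 := pow_le_pow_left₀ (abs_nonneg _) (hcd n) 2

lemma memL2r_add {r : ℝ} {c d : ℕ → ℝ} (hc : MemL2r r c) (hd : MemL2r r d) :
    MemL2r r (fun n => c n + d n) := by
  unfold MemL2r at *
  refine Summable.of_nonneg_of_le (fun n => by positivity) (fun n => ?_)
    (((hc.mul_left 2).add (hd.mul_left 2)))
  have hb : (fun n => c n + d n) n = c n + d n := rfl
  rw [hb]
  have hW : (0 : ℝ) ≤ (1 + (n : ℝ)) ^ (2 * r) := Real.rpow_nonneg (by positivity) _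
  have := mul_nonneg hW (sq_nonneg (c n - d n))
  nlinarith

lemma rpow_sq {x : ℝ} (hx : 0 ≤ x) (y : ℝ) : (x ^ y) ^ 2 = x ^ (2 * y) := by
  rw [← Real.rpow_natCast (x ^ y) 2, ← Real.rpow_mul hx]
  congr 1
  push_cast
  ring

lemma summable_Kd_mul (n : ℕ) {F : ℕ → ℝ} {c : ℝ} (hF : ∀ m, |F m| ≤ c) :
    Summable fun m => Kd n m * F m := by
  refine summable_abs_iff.mp ?_
  refine Summable.of_nonneg_of_le (fun m => abs_nonneg _) (fun m => ?_)
    ((Jr_summable 2 one_lt_two n).mul_left c)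
  rw [abs_mul, abs_of_nonneg (Kd_nonneg n m), Kd_eq_Jr]
  calc Jr 2 n m * |F m| ≤ Jr 2 n m * c := mul_le_mul_of_nonneg_left (hF m) (Jr_nonneg 2 n m)
    _ = c * Jr 2 n m := mul_comm _ _

lemma schur (r : ℝ) (hr0 : 0 ≤ r) (hr1 : r ≤ 3/4) {g : ℕ → ℝ} {c : ℝ} (hgb : ∀ m, |g m| ≤ c)
    (hg2 : Summable fun m : ℕ => (1 + (m : ℝ)) ^ (2 * r) * g m ^ 2) :
    MemL2r r (fun n => ∑' m, Kd n m * g m) := by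
  have h54 : (1 : ℝ) < 5/4 := by norm_num
  set c54 : ℝ := ∑' k : ℕ, ((k : ℝ) + 1) ^ (-(5/4 : ℝ)) with hc54
  have hc54nn : 0 ≤ c54 := tsum_nonneg fun k => Real.rpow_nonneg (by positivity) _
  set A0 : ℝ := 4 * c54 with hA0
  have hA0nn : 0 ≤ A0 := by positivity
  set u : ℕ → ℝ := fun m => (1 + (m : ℝ)) ^ r * |g m| with hu
  have hu0 : ∀ m, 0 ≤ u m := fun m =>
    mul_nonneg (Real.rpow_nonneg (by positivity) _) (abs_nonneg _)
  have hu2 : Summable (fun m => u m ^ 2) := by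
    refine hg2.congr fun m => ?_
    rw [hu]
    rw [mul_pow, rpow_sq (by positivity), sq_abs]
  set U : ℝ := ∑' m, u m ^ 2 with hU
  have hUnn : 0 ≤ U := tsum_nonneg fun m => sq_nonneg _
  have hUb : ∀ m, u m ^ 2 ≤ U := fun m => Summable.le_tsum hu2 m fun _ _ => sq_nonneg _
  set M : ℕ → ℕ → ℝ := fun n m => 2 * Jr (5/4) n m with hM
  have hM0 : ∀ n m, 0 ≤ M n m := fun n m => mul_nonneg (by norm_num) (Jr_nonneg _ _ _)
  have rowMs : ∀ n, Summable (fun m => M n m) := fun n => (Jr_summable (5/4) h54 n).mul_left 2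
  have rowMb : ∀ n, (∑' m, M n m) ≤ A0 := by
    intro n
    rw [hM]
    rw [tsum_mul_left]
    have := Jr_tsum_le (5/4) h54 n
    rw [hA0]
    nlinarith [this]
  have colMs : ∀ m, Summable (fun n => M n m) := by
    intro m
    refine ((Jr_summable (5/4) h54 m).mul_left 2).congr fun n => ?_
    show (2:ℝ) * Jr (5/4) m n = 2 * Jr (5/4) n m
    rw [Jr_symm]
  have colMb : ∀ m, (∑' n, M n m) ≤ A0 := by
    intro m
    have he : (∑' n, M n m) = ∑' n, M m n := tsum_congr fun n =>
      show 2 * Jr (5/4) n m = 2 * Jr (5/4) m n by rw [Jr_symm]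
    rw [he]; exact rowMb m
  set L : ℕ → ℕ → ℝ := fun n m => (1 + (n : ℝ)) ^ r * (1 + (m : ℝ)) ^ (-r) * Kd n m with hL
  have hL0 : ∀ n m, 0 ≤ L n m := fun n m =>
    mul_nonneg (mul_nonneg (Real.rpow_nonneg (by positivity) _)
      (Real.rpow_nonneg (by positivity) _)) (Kd_nonneg n m)
  have hLM : ∀ n m, L n m ≤ M n m := by
    intro n m
    by_cases hmn : m = n
    · show (1 + (n:ℝ)) ^ r * (1 + (m:ℝ)) ^ (-r) * Kd n m ≤ 2 * Jr (5/4) n m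
      subst hmn
      unfold Kd Jr
      simp
    · set s : ℝ := |(n : ℝ) - m| with hs
      have hs1 : 1 ≤ s := one_le_abs_sub hmn
      have hs0 : 0 < s := lt_of_lt_of_le one_pos hs1
      have h1 : (1 + (n : ℝ)) ≤ (1 + (m : ℝ)) * (1 + s) := by
        have hnm : (n : ℝ) - m ≤ s := le_abs_self _
        have hm0 : (0 : ℝ) ≤ m := Nat.cast_nonneg m
        nlinarith
      have h2 : (1 + (n : ℝ)) ^ r ≤ (1 + (m : ℝ)) ^ r * (1 + s) ^ r := by
        rw [← Real.mul_rpow (by positivity) (by positivity)]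
        exact Real.rpow_le_rpow (by positivity) h1 hr0
      have hone : (1 + (m : ℝ)) ^ r * (1 + (m : ℝ)) ^ (-r) = 1 := by
        rw [← Real.rpow_add (by positivity)]
        simp
      have h3 : (1 + (n : ℝ)) ^ r * (1 + (m : ℝ)) ^ (-r) ≤ (1 + s) ^ r := by
        have := mul_le_mul_of_nonneg_right h2 (Real.rpow_nonneg (by positivity : (0:ℝ) ≤ 1 + (m:ℝ)) (-r))
        calc (1 + (n : ℝ)) ^ r * (1 + (m : ℝ)) ^ (-r)
            ≤ (1 + (m : ℝ)) ^ r * (1 + s) ^ r * (1 + (m : ℝ)) ^ (-r) := this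
          _ = (1 + s) ^ r * ((1 + (m : ℝ)) ^ r * (1 + (m : ℝ)) ^ (-r)) := by ring
          _ = (1 + s) ^ r := by rw [hone, mul_one]
      have h4 : (1 + s) ^ r ≤ (1 + s) ^ (3/4 : ℝ) :=
        Real.rpow_le_rpow_of_exponent_le (by linarith) hr1
      have h5 : (1 + s) ^ (3/4 : ℝ) ≤ 2 * s ^ (3/4 : ℝ) := by
        calc (1 + s) ^ (3/4 : ℝ) ≤ (2 * s) ^ (3/4 : ℝ) :=
              Real.rpow_le_rpow (by linarith) (by linarith) (by norm_num)
          _ = 2 ^ (3/4 : ℝ) * s ^ (3/4 : ℝ) := Real.mul_rpow (by norm_num) hs0.le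
          _ ≤ 2 * s ^ (3/4 : ℝ) := by
              have : (2 : ℝ) ^ (3/4 : ℝ) ≤ 2 ^ (1 : ℝ) :=
                Real.rpow_le_rpow_of_exponent_le one_le_two (by norm_num)
              rw [Real.rpow_one] at this
              exact mul_le_mul_of_nonneg_right this (Real.rpow_nonneg hs0.le _)
      have hKds : Kd n m = s ^ (-(2 : ℝ)) := by
        unfold Kd
        rw [if_neg hmn, hs, Real.rpow_neg (abs_nonneg _),
          show ((2:ℝ)) = ((2:ℕ):ℝ) by norm_num, Real.rpow_natCast, sq_abs]
      have hJs : Jr (5/4) n m = s ^ (-(5/4 : ℝ)) := by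
        unfold Jr
        rw [if_neg hmn]
      have hfin : (1 + (n : ℝ)) ^ r * (1 + (m : ℝ)) ^ (-r) * Kd n m
          ≤ (2 * s ^ (3/4 : ℝ)) * s ^ (-(2 : ℝ)) := by
        rw [hKds]
        exact mul_le_mul_of_nonneg_right ((h3.trans h4).trans h5)
          (Real.rpow_nonneg hs0.le _)
      show (1 + (n:ℝ)) ^ r * (1 + (m:ℝ)) ^ (-r) * Kd n m ≤ 2 * Jr (5/4) n m
      rw [hJs]
      refine hfin.trans (le_of_eq ?_)
      rw [mul_assoc, ← Real.rpow_add hs0]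
      norm_num
  -- per-n Schur estimate
  have hKgabs : ∀ n, Summable fun m => Kd n m * |g m| := by
    intro n
    exact summable_Kd_mul n (F := fun m => |g m|) (fun m => by rw [abs_abs]; exact hgb m)
  have hKg : ∀ n, Summable fun m => Kd n m * g m := fun n => summable_Kd_mul n hgb
  set V : ℕ → ℝ := fun n => ∑' m, M n m * u m ^ 2 with hV
  have hMu2s : ∀ n, Summable fun m => M n m * u m ^ 2 := by
    intro n
    refine Summable.of_nonneg_of_le (fun m => mul_nonneg (hM0 n m) (sq_nonneg _))
      (fun m => mul_le_mul_of_nonneg_left (hUb m) (hM0 n m)) ((rowMs n).mul_right U)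
  have key : ∀ n : ℕ, (1 + (n : ℝ)) ^ (2 * r) * (∑' m, Kd n m * g m) ^ 2 ≤ A0 * V n := by
    intro n
    have hLs : Summable (fun m => L n m) :=
      Summable.of_nonneg_of_le (hL0 n) (hLM n) (rowMs n)
    have hLu2 : Summable (fun m => L n m * u m ^ 2) := by
      refine Summable.of_nonneg_of_le (fun m => mul_nonneg (hL0 n m) (sq_nonneg _))
        (fun m => mul_le_mul_of_nonneg_right (hLM n m) (sq_nonneg _)) (hMu2s n)
    obtain ⟨hLusum, hCS⟩ := tsum_CS (hL0 n) hu0 hLs hLu2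
    have bound1 : (∑' m, L n m) ≤ A0 :=
      (Summable.tsum_le_tsum (hLM n) hLs (rowMs n)).trans (rowMb n)
    have bound2 : (∑' m, L n m * u m ^ 2) ≤ V n :=
      Summable.tsum_le_tsum (fun m => mul_le_mul_of_nonneg_right (hLM n m) (sq_nonneg _)) hLu2 (hMu2s n)
    have habs : |∑' m, Kd n m * g m| ≤ ∑' m, Kd n m * |g m| := by
      have hns : Summable fun m => ‖Kd n m * g m‖ := by
        refine (hKgabs n).congr fun m => ?_
        rw [Real.norm_eq_abs, abs_mul, abs_of_nonneg (Kd_nonneg n m)]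
      have := norm_tsum_le_tsum_norm hns
      rw [Real.norm_eq_abs] at this
      refine this.trans (le_of_eq (tsum_congr fun m => ?_))
      rw [Real.norm_eq_abs, abs_mul, abs_of_nonneg (Kd_nonneg n m)]
    have htr : (1 + (n : ℝ)) ^ r * (∑' m, Kd n m * |g m|) = ∑' m, L n m * u m := by
      rw [← tsum_mul_left]
      refine tsum_congr fun m => ?_
      have hone : (1 + (m : ℝ)) ^ (-r) * (1 + (m : ℝ)) ^ r = 1 := by
        rw [← Real.rpow_add (by positivity)]
        simp
      have : L n m * u m
          = ((1 + (m : ℝ)) ^ (-r) * (1 + (m : ℝ)) ^ r) * ((1 + (n : ℝ)) ^ r * (Kd n m * |g m|)) := by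
        show ((1 + (n:ℝ)) ^ r * (1 + (m:ℝ)) ^ (-r) * Kd n m) * ((1 + (m:ℝ)) ^ r * |g m|) = _
        ring
      rw [this, hone, one_mul]
    have hw0 : (0 : ℝ) ≤ (1 + (n : ℝ)) ^ r := Real.rpow_nonneg (by positivity) _
    have hKgabs_nn : (0 : ℝ) ≤ ∑' m, Kd n m * |g m| :=
      tsum_nonneg fun m => mul_nonneg (Kd_nonneg n m) (abs_nonneg _)
    calc (1 + (n : ℝ)) ^ (2 * r) * (∑' m, Kd n m * g m) ^ 2
        = ((1 + (n : ℝ)) ^ r * |∑' m, Kd n m * g m|) ^ 2 := by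
          rw [mul_pow, rpow_sq (by positivity), sq_abs]
      _ ≤ ((1 + (n : ℝ)) ^ r * (∑' m, Kd n m * |g m|)) ^ 2 := by
          apply pow_le_pow_left₀ (mul_nonneg hw0 (abs_nonneg _))
          exact mul_le_mul_of_nonneg_left habs hw0
      _ = (∑' m, L n m * u m) ^ 2 := by rw [htr]
      _ ≤ (∑' m, L n m) * (∑' m, L n m * u m ^ 2) := hCS
      _ ≤ A0 * V n := by
          apply mul_le_mul bound1 bound2
            (tsum_nonneg fun m => mul_nonneg (hL0 n m) (sq_nonneg _)) hA0nn
  -- Fubini: Summable V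
  have hfprod : Summable (fun p : ℕ × ℕ => M p.2 p.1 * u p.1 ^ 2) := by
    refine (summable_prod_of_nonneg ?_).mpr ⟨?_, ?_⟩
    · intro p; exact mul_nonneg (hM0 p.2 p.1) (sq_nonneg _)
    · intro m; exact (colMs m).mul_right (u m ^ 2)
    · refine Summable.of_nonneg_of_le
        (fun m => tsum_nonneg fun n => mul_nonneg (hM0 n m) (sq_nonneg _))
        (fun m => ?_) (hu2.mul_left A0)
      show (∑' n0 : ℕ, M n0 m * u m ^ 2) ≤ A0 * u m ^ 2
      rw [tsum_mul_right]
      exact mul_le_mul_of_nonneg_right (colMb m) (sq_nonneg _)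
  have hVsum : Summable V := by
    have hswap : Summable (fun p : ℕ × ℕ => M p.1 p.2 * u p.2 ^ 2) := by
      have := hfprod.prod_symm
      exact this.congr fun p => rfl
    have := (summable_prod_of_nonneg
      (fun p : ℕ × ℕ => mul_nonneg (hM0 p.1 p.2) (sq_nonneg _))).mp hswap
    exact this.2
  exact Summable.of_nonneg_of_le
    (fun n => mul_nonneg (Real.rpow_nonneg (by positivity) _) (sq_nonneg _))
    key (hVsum.mul_left A0)


lemma Kd_summable (n : ℕ) : Summable (Kd n) :=
  (Jr_summable 2 one_lt_two n).congr fun m => (Kd_eq_Jr n m).symm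

lemma Kd_tsum_eq (n : ℕ) :
    ∑' m, Kd n m = Real.pi ^ 2 / 3 - ∑' k : ℕ, ((((k + n : ℕ) : ℝ) + 1) ^ 2)⁻¹ := by
  have hf : Summable (fun k : ℕ => (((k : ℝ) + 1) ^ 2)⁻¹) := basel'.summable
  have hS : (∑' k : ℕ, (((k : ℝ) + 1) ^ 2)⁻¹) = Real.pi ^ 2 / 6 := basel'.tsum_eq
  have hback : (∑' m : ℕ, Kd n (m + (n + 1))) = Real.pi ^ 2 / 6 := by
    rw [← hS]
    refine tsum_congr fun m => ?_
    unfold Kd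
    rw [if_neg (by omega)]
    congr 1
    push_cast
    ring
  have hfront : (∑ i ∈ Finset.range (n + 1), Kd n i)
      = ∑ i ∈ Finset.range n, (((i : ℝ) + 1) ^ 2)⁻¹ := by
    rw [Finset.sum_range_succ, show Kd n n = 0 by unfold Kd; rw [if_pos rfl], add_zero]
    rw [← Finset.sum_range_reflect (fun i => Kd n i) n]
    refine Finset.sum_congr rfl fun i hi => ?_
    have hi' : i < n := Finset.mem_range.mp hi
    unfold Kd
    rw [if_neg (by omega)]
    congr 1
    have hcast : ((n - 1 - i : ℕ) : ℝ) = (n : ℝ) - 1 - i := by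
      have : (n : ℤ) - 1 - i = ((n - 1 - i : ℕ) : ℤ) := by omega
      exact_mod_cast this.symm
    rw [hcast]
    ring
  have htail := Summable.sum_add_tsum_nat_add (f := fun k : ℕ => (((k : ℝ) + 1) ^ 2)⁻¹) n hf
  rw [hS] at htail
  have hsplit := Summable.sum_add_tsum_nat_add (f := Kd n) (n + 1) (Kd_summable n)
  rw [hfront, hback] at hsplit
  have htail' : (∑ i ∈ Finset.range n, (((i : ℝ) + 1) ^ 2)⁻¹)
      = Real.pi ^ 2 / 6 - ∑' k : ℕ, ((((k + n : ℕ) : ℝ) + 1) ^ 2)⁻¹ := by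
    have : (∑' i : ℕ, ((((i + n : ℕ) : ℝ) + 1) ^ 2)⁻¹)
        = ∑' i : ℕ, (fun k : ℕ => (((k : ℝ) + 1) ^ 2)⁻¹) (i + n) := by
      refine tsum_congr fun i => ?_
      norm_num
    rw [this]
    linarith [htail]
  rw [← hsplit, htail']
  ring

lemma tail_bound (n : ℕ) :
    (∑' k : ℕ, ((((k + n : ℕ) : ℝ) + 1) ^ 2)⁻¹)
      ≤ (∑' k : ℕ, ((k : ℝ) + 1) ^ (-(3/2 : ℝ))) * ((n : ℝ) + 1) ^ (-(1/2 : ℝ)) := by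
  have hsh := summable_shift (3/2) (by norm_num)
  have hterm : ∀ k : ℕ, ((((k + n : ℕ) : ℝ) + 1) ^ 2)⁻¹
      ≤ ((k : ℝ) + 1) ^ (-(3/2 : ℝ)) * ((n : ℝ) + 1) ^ (-(1/2 : ℝ)) := by
    intro k
    have hx0 : (0 : ℝ) < ((k + n : ℕ) : ℝ) + 1 := by positivity
    have hxk : (k : ℝ) + 1 ≤ ((k + n : ℕ) : ℝ) + 1 := by push_cast; linarith [Nat.cast_nonneg (α := ℝ) n]
    have hxn : (n : ℝ) + 1 ≤ ((k + n : ℕ) : ℝ) + 1 := by push_cast; linarith [Nat.cast_nonneg (α := ℝ) k]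
    have h0 : ((((k + n : ℕ) : ℝ) + 1) ^ 2)⁻¹
        = (((k + n : ℕ) : ℝ) + 1) ^ (-(3/2 : ℝ)) * (((k + n : ℕ) : ℝ) + 1) ^ (-(1/2 : ℝ)) := by
      rw [← Real.rpow_add hx0, show (-(3/2 : ℝ)) + -(1/2 : ℝ) = -(2 : ℝ) by norm_num,
        Real.rpow_neg hx0.le, show ((2:ℝ)) = ((2:ℕ):ℝ) by norm_num, Real.rpow_natCast]
    rw [h0]
    refine mul_le_mul ?_ ?_ (Real.rpow_nonneg hx0.le _) (Real.rpow_nonneg (by positivity) _)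
    · exact Real.rpow_le_rpow_of_nonpos (by positivity) hxk (by norm_num)
    · exact Real.rpow_le_rpow_of_nonpos (by positivity) hxn (by norm_num)
  have hrs : Summable (fun k : ℕ => ((k : ℝ) + 1) ^ (-(3/2 : ℝ)) * ((n : ℝ) + 1) ^ (-(1/2 : ℝ))) :=
    hsh.mul_right _
  have hls : Summable (fun k : ℕ => ((((k + n : ℕ) : ℝ) + 1) ^ 2)⁻¹) :=
    Summable.of_nonneg_of_le (fun k => by positivity) hterm hrs
  calc (∑' k : ℕ, ((((k + n : ℕ) : ℝ) + 1) ^ 2)⁻¹)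
      ≤ ∑' k : ℕ, ((k : ℝ) + 1) ^ (-(3/2 : ℝ)) * ((n : ℝ) + 1) ^ (-(1/2 : ℝ)) :=
        Summable.tsum_le_tsum hterm hls hrs
    _ = (∑' k : ℕ, ((k : ℝ) + 1) ^ (-(3/2 : ℝ))) * ((n : ℝ) + 1) ^ (-(1/2 : ℝ)) := tsum_mul_right

lemma B_bound (β : ℝ) (hβl : 1/2 ≤ β) (hβu : β ≤ 1) (n : ℕ) :
    |∑' m : ℕ, Kd n m * (((m : ℝ) + 1) ^ (-β) - ((n : ℝ) + 1) ^ (-β))|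
      ≤ (6 * (∑' k : ℕ, ((k : ℝ) + 1) ^ (-(3/2 : ℝ))) + 16) * ((n : ℝ) + 1) ^ (-(β + 1/2)) := by
  have h32 : (1 : ℝ) < 3/2 := by norm_num
  set c32 : ℝ := ∑' k : ℕ, ((k : ℝ) + 1) ^ (-(3/2 : ℝ)) with hc32
  have hc32nn : 0 ≤ c32 := tsum_nonneg fun k => Real.rpow_nonneg (by positivity) _
  set e : ℝ := β + 1/2 with he
  have he0 : 0 < e := by rw [he]; linarith
  have hxn : (0 : ℝ) < (n : ℝ) + 1 := by positivity
  set Δ : ℕ → ℝ := fun m => ((m : ℝ) + 1) ^ (-β) - ((n : ℝ) + 1) ^ (-β) with hΔ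
  set φ1 : ℕ → ℝ := fun m => 3 * ((n : ℝ) + 1) ^ (-e) * Jr (3/2) n m with hφ1
  set ρ : ℕ → ℝ := fun m : ℕ =>
    if 2*m+2 ≤ n then 8 * ((m : ℝ) + 1) ^ (-(1/2 : ℝ)) * (((n : ℝ) + 1) ^ 2)⁻¹ else 0 with hρ
  have hφ1nn : ∀ m, 0 ≤ φ1 m := fun m =>
    mul_nonneg (by positivity) (Jr_nonneg _ _ _)
  have hρnn : ∀ m, 0 ≤ ρ m := by
    intro m
    rw [hρ]
    dsimp only
    split
    · positivity
    · exact le_refl 0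
  have hsumφ1 : Summable φ1 := (Jr_summable (3/2) h32 n).mul_left _
  have hsumρ : Summable ρ := by
    refine summable_of_ne_finset_zero (s := Finset.range n) fun m hm => ?_
    rw [hρ]
    dsimp only
    rw [if_neg fun hc => hm (Finset.mem_range.mpr (by omega))]
  have hwble : ∀ k : ℕ, ((k : ℝ) + 1) ^ (-β) ≤ 1 := fun k =>
    Real.rpow_le_one_of_one_le_of_nonpos (by linarith [Nat.cast_nonneg (α := ℝ) k]) (by linarith)
  have hwnn : ∀ k : ℕ, (0:ℝ) ≤ ((k : ℝ) + 1) ^ (-β) := fun k => Real.rpow_nonneg (by positivity) _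
  have habs : Summable (fun m => |Kd n m * Δ m|) := by
    refine Summable.of_nonneg_of_le (fun m => abs_nonneg _) (fun m => ?_)
      ((Jr_summable 2 one_lt_two n).mul_left 2)
    rw [abs_mul, abs_of_nonneg (Kd_nonneg n m), Kd_eq_Jr]
    have hΔ2 : |Δ m| ≤ 2 := by
      rw [hΔ]
      dsimp only
      rw [abs_sub_le_iff]
      constructor <;> [linarith [hwble m, hwnn n, hwble n, hwnn m];
        linarith [hwble m, hwnn n, hwble n, hwnn m]]
    calc Jr 2 n m * |Δ m| ≤ Jr 2 n m * 2 :=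
          mul_le_mul_of_nonneg_left hΔ2 (Jr_nonneg 2 n m)
      _ = 2 * Jr 2 n m := by ring
  have hterm : ∀ m, |Kd n m * Δ m| ≤ φ1 m + ρ m := by
    intro m
    by_cases hmn : m = n
    · rw [show Kd n m = 0 by unfold Kd; rw [if_pos hmn], zero_mul, abs_zero]
      exact add_nonneg (hφ1nn m) (hρnn m)
    · have hKd : Kd n m = (((n : ℝ) - m) ^ 2)⁻¹ := by unfold Kd; rw [if_neg hmn]
      rw [abs_mul, abs_of_nonneg (Kd_nonneg n m), hKd]
      have hm1 : (1:ℝ) ≤ (m:ℝ)+1 := by linarith [Nat.cast_nonneg (α := ℝ) m]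
      have hn1 : (1:ℝ) ≤ (n:ℝ)+1 := by linarith [Nat.cast_nonneg (α := ℝ) n]
      by_cases hreg : 2*m+2 ≤ n
      · have hcast : 2*(m:ℝ)+2 ≤ (n:ℝ) := by exact_mod_cast hreg
        have hnm_pos : (0:ℝ) < (n:ℝ) - m := by linarith [Nat.cast_nonneg (α := ℝ) m]
        have hKb : (((n:ℝ) - m) ^ 2)⁻¹ ≤ 4 * (((n:ℝ)+1) ^ 2)⁻¹ := by
          rw [show (((n:ℝ) - m) ^ 2)⁻¹ = 1/((n:ℝ) - m)^2 by rw [one_div],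
            show (4:ℝ) * (((n:ℝ)+1)^2)⁻¹ = 4/((n:ℝ)+1)^2 by rw [div_eq_mul_inv]]
          rw [div_le_div_iff₀ (by positivity) (by positivity)]
          nlinarith [Nat.cast_nonneg (α := ℝ) m]
        have hwm : ((m:ℝ)+1) ^ (-β) ≤ ((m:ℝ)+1) ^ (-(1/2:ℝ)) :=
          Real.rpow_le_rpow_of_exponent_le hm1 (by linarith)
        have hwn : ((n:ℝ)+1) ^ (-β) ≤ ((m:ℝ)+1) ^ (-(1/2:ℝ)) := by
          calc ((n:ℝ)+1) ^ (-β) ≤ ((n:ℝ)+1) ^ (-(1/2:ℝ)) :=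
                Real.rpow_le_rpow_of_exponent_le hn1 (by linarith)
            _ ≤ ((m:ℝ)+1) ^ (-(1/2:ℝ)) := by
                apply Real.rpow_le_rpow_of_nonpos (by positivity) _ (by norm_num)
                linarith [Nat.cast_nonneg (α := ℝ) m]
        have hΔb : |Δ m| ≤ 2 * ((m:ℝ)+1) ^ (-(1/2:ℝ)) := by
          rw [hΔ]
          dsimp only
          rw [abs_sub_le_iff]
          constructor
          · linarith [hwnn n, hwm]
          · linarith [hwnn m, hwn]
        calc (((n:ℝ) - m) ^ 2)⁻¹ * |Δ m|
            ≤ (4 * (((n:ℝ)+1) ^ 2)⁻¹) * (2 * ((m:ℝ)+1) ^ (-(1/2:ℝ))) :=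
              mul_le_mul hKb hΔb (abs_nonneg _) (by positivity)
          _ = 8 * ((m:ℝ)+1) ^ (-(1/2:ℝ)) * (((n:ℝ)+1) ^ 2)⁻¹ := by ring
          _ = ρ m := by rw [hρ]; dsimp only; rw [if_pos hreg]
          _ ≤ φ1 m + ρ m := le_add_of_nonneg_left (hφ1nn m)
      · have hn2m : n ≤ 2*m+1 := by omega
        have hup : (n:ℝ)+1 ≤ 2*((m:ℝ)+1) := by
          have := (Nat.cast_le (α := ℝ)).mpr hn2m
          push_cast at this
          linarith
        have hd := rpow_diff_le (β := β) hβu (by linarith) hm1 hn1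
        have habs_eq : |((m:ℝ)+1) - ((n:ℝ)+1)| = |(n:ℝ) - (m:ℝ)| := by
          rw [abs_sub_comm]
          congr 1
          ring
        rw [habs_eq] at hd
        have hminb : ((n:ℝ)+1)/2 ≤ min ((m:ℝ)+1) ((n:ℝ)+1) :=
          le_min (by linarith) (by linarith)
        have hmine : (min ((m:ℝ)+1) ((n:ℝ)+1)) ^ (-(β+1/2)) ≤ 3 * ((n:ℝ)+1) ^ (-e) := by
          have step1 : (min ((m:ℝ)+1) ((n:ℝ)+1)) ^ (-(β+1/2))
              ≤ (((n:ℝ)+1)/2) ^ (-(β+1/2)) :=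
            Real.rpow_le_rpow_of_nonpos (by positivity) hminb (by linarith)
          have step2 : (((n:ℝ)+1)/2) ^ (-(β+1/2)) = 2 ^ (β+1/2) * ((n:ℝ)+1) ^ (-(β+1/2)) := by
            rw [Real.div_rpow hxn.le (by norm_num : (0:ℝ) ≤ 2), div_eq_mul_inv,
              Real.rpow_neg (by norm_num : (0:ℝ) ≤ 2), inv_inv]
            ring
          have step3 : (2:ℝ) ^ (β+1/2) ≤ 3 := two_rpow_le_three (by linarith)
          calc (min ((m:ℝ)+1) ((n:ℝ)+1)) ^ (-(β+1/2))
              ≤ 2 ^ (β+1/2) * ((n:ℝ)+1) ^ (-(β+1/2)) := by rw [← step2]; exact step1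
            _ ≤ 3 * ((n:ℝ)+1) ^ (-(β+1/2)) :=
                mul_le_mul_of_nonneg_right step3 (Real.rpow_nonneg hxn.le _)
            _ = 3 * ((n:ℝ)+1) ^ (-e) := by rw [he]
        have hs1 : 1 ≤ |(n:ℝ) - (m:ℝ)| := one_le_abs_sub hmn
        have hs0 : (0:ℝ) < |(n:ℝ) - m| := lt_of_lt_of_le one_pos hs1
        have hsq : Real.sqrt |(n:ℝ) - m| * (((n:ℝ) - m) ^ 2)⁻¹ = Jr (3/2) n m := by
          unfold Jr
          rw [if_neg hmn, ← sq_abs ((n:ℝ) - m), Real.sqrt_eq_rpow,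
            show ((|(n:ℝ) - m|) ^ 2)⁻¹ = |(n:ℝ) - m| ^ (-(2:ℝ)) by
              rw [Real.rpow_neg hs0.le, show ((2:ℝ)) = ((2:ℕ):ℝ) by norm_num,
                Real.rpow_natCast],
            ← Real.rpow_add hs0]
          congr 1
          norm_num
        have hΔb : |Δ m| ≤ Real.sqrt |(n:ℝ) - m| * (3 * ((n:ℝ)+1) ^ (-e)) := by
          rw [hΔ]
          dsimp only
          refine hd.trans ?_
          exact mul_le_mul_of_nonneg_left hmine (Real.sqrt_nonneg _)
        calc (((n:ℝ) - m) ^ 2)⁻¹ * |Δ m|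
            ≤ (((n:ℝ) - m) ^ 2)⁻¹ * (Real.sqrt |(n:ℝ) - m| * (3 * ((n:ℝ)+1) ^ (-e))) :=
              mul_le_mul_of_nonneg_left hΔb (by positivity)
          _ = 3 * ((n:ℝ)+1) ^ (-e) * (Real.sqrt |(n:ℝ) - m| * (((n:ℝ) - m) ^ 2)⁻¹) := by ring
          _ = 3 * ((n:ℝ)+1) ^ (-e) * Jr (3/2) n m := by rw [hsq]
          _ = φ1 m := by rw [hφ1]
          _ ≤ φ1 m + ρ m := le_add_of_nonneg_right (hρnn m)
  have h0 : |∑' m, Kd n m * Δ m| ≤ ∑' m, |Kd n m * Δ m| := by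
    have hns : Summable fun m => ‖Kd n m * Δ m‖ := habs.congr fun m => (Real.norm_eq_abs _).symm
    have := norm_tsum_le_tsum_norm hns
    rw [Real.norm_eq_abs] at this
    refine this.trans (le_of_eq (tsum_congr fun m => Real.norm_eq_abs _))
  have h1 : (∑' m, |Kd n m * Δ m|) ≤ ∑' m, (φ1 m + ρ m) :=
    Summable.tsum_le_tsum hterm habs (hsumφ1.add hsumρ)
  have h2 : (∑' m, (φ1 m + ρ m)) = (∑' m, φ1 m) + ∑' m, ρ m := Summable.tsum_add hsumφ1 hsumρ
  have h3 : (∑' m, φ1 m) ≤ 3 * ((n:ℝ)+1) ^ (-e) * (2 * c32) := by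
    rw [hφ1]
    rw [tsum_mul_left]
    exact mul_le_mul_of_nonneg_left (Jr_tsum_le (3/2) h32 n) (by positivity)
  have h4 : (∑' m, ρ m) ≤ 16 * ((n:ℝ)+1) ^ (-(3/2:ℝ)) := by
    rw [tsum_eq_sum (s := Finset.range n) (fun m hm => by
      rw [hρ]; dsimp only; exact if_neg fun hc => hm (Finset.mem_range.mpr (by omega)))]
    have hstep : (∑ m ∈ Finset.range n, ρ m)
        ≤ ∑ m ∈ Finset.range n, 8 * (((n:ℝ)+1) ^ 2)⁻¹ * ((m:ℝ)+1) ^ (-(1/2:ℝ)) := by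
      refine Finset.sum_le_sum fun m _ => ?_
      rw [hρ]
      dsimp only
      split
      · apply le_of_eq
        ring
      · positivity
    have hsum2 : (∑ m ∈ Finset.range n, 8 * (((n:ℝ)+1) ^ 2)⁻¹ * ((m:ℝ)+1) ^ (-(1/2:ℝ)))
        = 8 * (((n:ℝ)+1) ^ 2)⁻¹ * ∑ m ∈ Finset.range n, ((m:ℝ)+1) ^ (-(1/2:ℝ)) := by
      rw [Finset.mul_sum]
    have hinv2 : (((n:ℝ)+1) ^ 2)⁻¹ = ((n:ℝ)+1) ^ (-(2:ℝ)) := by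
      rw [Real.rpow_neg hxn.le, show ((2:ℝ)) = ((2:ℕ):ℝ) by norm_num, Real.rpow_natCast]
    have hsqrt : Real.sqrt (n:ℝ) ≤ Real.sqrt ((n:ℝ)+1) := Real.sqrt_le_sqrt (by linarith)
    calc (∑ m ∈ Finset.range n, ρ m)
        ≤ 8 * (((n:ℝ)+1) ^ 2)⁻¹ * ∑ m ∈ Finset.range n, ((m:ℝ)+1) ^ (-(1/2:ℝ)) := by
          rw [← hsum2]; exact hstep
      _ ≤ 8 * (((n:ℝ)+1) ^ 2)⁻¹ * (2 * Real.sqrt (n:ℝ)) :=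
          mul_le_mul_of_nonneg_left (sum_inv_sqrt_le n) (by positivity)
      _ ≤ 8 * (((n:ℝ)+1) ^ 2)⁻¹ * (2 * Real.sqrt ((n:ℝ)+1)) := by
          apply mul_le_mul_of_nonneg_left _ (by positivity)
          linarith
      _ = 16 * (((n:ℝ)+1) ^ (-(2:ℝ)) * ((n:ℝ)+1) ^ ((1:ℝ)/2)) := by
          rw [hinv2, Real.sqrt_eq_rpow]
          ring
      _ = 16 * ((n:ℝ)+1) ^ (-(3/2:ℝ)) := by
          rw [← Real.rpow_add hxn]
          norm_num
  have h5 : 16 * ((n:ℝ)+1) ^ (-(3/2:ℝ)) ≤ 16 * ((n:ℝ)+1) ^ (-e) := by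
    apply mul_le_mul_of_nonneg_left _ (by norm_num)
    apply Real.rpow_le_rpow_of_exponent_le (by linarith [Nat.cast_nonneg (α := ℝ) n])
    rw [he]
    linarith
  have hfin : |∑' m, Kd n m * Δ m| ≤ (6 * c32 + 16) * ((n:ℝ)+1) ^ (-e) := by
    have := h0.trans (h1.trans_eq h2)
    nlinarith [Real.rpow_nonneg hxn.le (-e)]
  exact hfin

/-- If `β ∈ [1/2,1]`, `|h_n| ≤ C(n+1)^{-β}` and `h_n - v(n+1)^{-β} ∈ ℓ²_{β-1/4}`, then
`Σ_{m≠n} h_m/(n-m)²` converges absolutely for each `n` and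
`Σ_{m≠n} h_m/(n-m)² - (π²v/3)(n+1)^{-β} ∈ ℓ²_{β-1/4}`. -/
theorem stmt18 (β v : ℝ) (hβ : β ∈ Set.Icc (1 / 2 : ℝ) 1) (h : ℕ → ℝ)
    (C : ℝ) (hC : 0 < C)
    (hbd : ∀ n : ℕ, |h n| ≤ C * ((n : ℝ) + 1) ^ (-β))
    (hl2 : MemL2r (β - 1 / 4) (fun n : ℕ => h n - v * ((n : ℝ) + 1) ^ (-β))) :
    (∀ n : ℕ, Summable (fun m : ℕ => if m = n then (0 : ℝ) else
        |h m / ((n : ℝ) - (m : ℝ)) ^ 2|)) ∧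
    MemL2r (β - 1 / 4) (fun n : ℕ =>
      (∑' m : ℕ, if m = n then (0 : ℝ) else h m / ((n : ℝ) - (m : ℝ)) ^ 2)
        - Real.pi ^ 2 * v / 3 * ((n : ℝ) + 1) ^ (-β)) := by
  obtain ⟨hβl, hβu⟩ := hβ
  have hβ0 : (0:ℝ) ≤ β := by linarith
  have h32 : (1:ℝ) < 3/2 := by norm_num
  have hwnn : ∀ k : ℕ, (0:ℝ) ≤ ((k:ℝ)+1)^(-β) := fun k => Real.rpow_nonneg (by positivity) _
  have hwle1 : ∀ k : ℕ, ((k:ℝ)+1)^(-β) ≤ 1 := fun k =>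
    Real.rpow_le_one_of_one_le_of_nonpos (by linarith [Nat.cast_nonneg (α := ℝ) k]) (by linarith)
  have hhbd : ∀ m : ℕ, |h m| ≤ C := by
    intro m
    refine (hbd m).trans ?_
    nlinarith [hwle1 m, hwnn m, hC.le]
  set g : ℕ → ℝ := fun n : ℕ => h n - v * ((n : ℝ) + 1) ^ (-β) with hgdef
  have hvw : ∀ m : ℕ, |v * ((m:ℝ)+1)^(-β)| ≤ |v| := by
    intro m
    rw [abs_mul, abs_of_nonneg (hwnn m)]
    nlinarith [hwle1 m, hwnn m, abs_nonneg v]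
  have hgbd : ∀ m, |g m| ≤ C + |v| := by
    intro m
    rw [hgdef]
    dsimp only
    rw [abs_sub_le_iff]
    constructor
    · linarith [le_abs_self (h m), hhbd m, neg_abs_le (v * ((m:ℝ)+1)^(-β)), hvw m]
    · linarith [le_abs_self (v * ((m:ℝ)+1)^(-β)), hvw m, neg_abs_le (h m), hhbd m]
  have part1 : ∀ n : ℕ, Summable fun m : ℕ => if m = n then (0:ℝ) else
      |h m / ((n:ℝ)-(m:ℝ))^2| := by
    intro n
    refine Summable.of_nonneg_of_le (fun m => ?_) (fun m => ?_)
      ((Jr_summable 2 one_lt_two n).mul_left C)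
    · by_cases hmn : m = n
      · rw [if_pos hmn]
      · rw [if_neg hmn]; exact abs_nonneg _
    · by_cases hmn : m = n
      · rw [if_pos hmn]; exact mul_nonneg hC.le (Jr_nonneg 2 n m)
      · rw [if_neg hmn]
        have hJ : Jr 2 n m = (((n:ℝ)-m)^2)⁻¹ := by
          rw [← Kd_eq_Jr]; unfold Kd; rw [if_neg hmn]
        rw [abs_div, abs_of_nonneg (sq_nonneg ((n:ℝ)-m)), div_eq_mul_inv, hJ]
        exact mul_le_mul_of_nonneg_right (hhbd m) (by positivity)
  refine ⟨part1, ?_⟩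
  have hsumKg : ∀ n, Summable fun m => Kd n m * g m := fun n => summable_Kd_mul n hgbd
  have hsumKw : ∀ n, Summable fun m => Kd n m * ((m:ℝ)+1)^(-β) := fun n =>
    summable_Kd_mul n (F := fun m => ((m:ℝ)+1)^(-β)) (c := 1)
      (fun m => by rw [abs_of_nonneg (hwnn m)]; exact hwle1 m)
  have hsumKwd : ∀ n, Summable fun m =>
      Kd n m * (((m:ℝ)+1)^(-β) - ((n:ℝ)+1)^(-β)) := by
    intro n
    refine summable_Kd_mul n (c := 2) (fun m => ?_)
    rw [abs_sub_le_iff]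
    constructor
    · linarith [hwle1 m, hwnn n]
    · linarith [hwle1 n, hwnn m]
  have key : ∀ n : ℕ,
      (∑' m : ℕ, if m = n then (0:ℝ) else h m / ((n:ℝ)-(m:ℝ))^2)
        - Real.pi^2 * v / 3 * ((n:ℝ)+1)^(-β)
      = (∑' m, Kd n m * g m)
        + (v * (∑' m, Kd n m * (((m:ℝ)+1)^(-β) - ((n:ℝ)+1)^(-β)))
           - v * (((n:ℝ)+1)^(-β) * ∑' k : ℕ, ((((k + n : ℕ):ℝ)+1)^2)⁻¹)) := by
    intro n
    have h1 : (∑' m : ℕ, if m = n then (0:ℝ) else h m / ((n:ℝ)-(m:ℝ))^2)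
        = ∑' m, Kd n m * h m := by
      refine tsum_congr fun m => ?_
      unfold Kd
      by_cases hmn : m = n
      · rw [if_pos hmn, if_pos hmn, zero_mul]
      · rw [if_neg hmn, if_neg hmn, div_eq_mul_inv, mul_comm]
    have h2 : (∑' m, Kd n m * h m)
        = (∑' m, Kd n m * g m) + v * ∑' m, Kd n m * ((m:ℝ)+1)^(-β) := by
      rw [← tsum_mul_left, ← Summable.tsum_add (hsumKg n) ((hsumKw n).mul_left v)]
      refine tsum_congr fun m => ?_
      rw [hgdef]
      dsimp only
      ring
    have h3 : (∑' m, Kd n m * ((m:ℝ)+1)^(-β))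
        = (∑' m, Kd n m * (((m:ℝ)+1)^(-β) - ((n:ℝ)+1)^(-β)))
          + (Real.pi ^ 2 / 3 - ∑' k : ℕ, ((((k + n : ℕ) : ℝ) + 1) ^ 2)⁻¹)
            * ((n:ℝ)+1)^(-β) := by
      rw [← Kd_tsum_eq n, ← tsum_mul_right,
        ← Summable.tsum_add (hsumKwd n) ((Kd_summable n).mul_right (((n:ℝ)+1)^(-β)))]
      refine tsum_congr fun m => ?_
      ring
    rw [h1, h2, h3]
    ring
  have hfun : (fun n : ℕ => (∑' m : ℕ, if m = n then (0:ℝ) else h m / ((n:ℝ)-(m:ℝ))^2)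
      - Real.pi^2 * v / 3 * ((n:ℝ)+1)^(-β))
      = fun n : ℕ => (∑' m, Kd n m * g m)
        + (v * (∑' m, Kd n m * (((m:ℝ)+1)^(-β) - ((n:ℝ)+1)^(-β)))
           - v * (((n:ℝ)+1)^(-β) * ∑' k : ℕ, ((((k + n : ℕ):ℝ)+1)^2)⁻¹)) := funext key
  rw [hfun]
  refine memL2r_add ?_ ?_
  · exact schur (β - 1/4) (by linarith) (by linarith) hgbd hl2
  · set c32 : ℝ := ∑' k : ℕ, ((k:ℝ)+1)^(-(3/2:ℝ)) with hc32
    have hc32nn : 0 ≤ c32 := tsum_nonneg fun k => Real.rpow_nonneg (by positivity) _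
    set D : ℝ := |v| * (6*c32+16) + |v| * c32 with hD
    have hDnn : 0 ≤ D := by positivity
    refine memL2r_of_le (d := fun n => D * ((n:ℝ)+1)^(-(β+1/2))) (fun n => ?_) ?_
    · have hxn : (0:ℝ) < (n:ℝ)+1 := by positivity
      have hB := B_bound β hβl hβu n
      have htail0 : (0:ℝ) ≤ ∑' k : ℕ, ((((k+n:ℕ):ℝ)+1)^2)⁻¹ :=
        tsum_nonneg fun k => by positivity
      have htail := tail_bound n
      set B : ℝ := ∑' m, Kd n m * (((m:ℝ)+1)^(-β) - ((n:ℝ)+1)^(-β)) with hBdef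
      set T : ℝ := ∑' k : ℕ, ((((k+n:ℕ):ℝ)+1)^2)⁻¹ with hT
      set X : ℝ := ((n:ℝ)+1)^(-(β+1/2)) with hX
      have hXnn : 0 ≤ X := Real.rpow_nonneg hxn.le _
      have hwt : ((n:ℝ)+1)^(-β) * T ≤ c32 * X := by
        have hmul : ((n:ℝ)+1)^(-β) * ((n:ℝ)+1)^(-(1/2:ℝ)) = X := by
          rw [hX, ← Real.rpow_add hxn]
          congr 1
          ring
        calc ((n:ℝ)+1)^(-β) * T ≤ ((n:ℝ)+1)^(-β) * (c32 * ((n:ℝ)+1)^(-(1/2:ℝ))) :=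
              mul_le_mul_of_nonneg_left htail (hwnn n)
          _ = c32 * (((n:ℝ)+1)^(-β) * ((n:ℝ)+1)^(-(1/2:ℝ))) := by ring
          _ = c32 * X := by rw [hmul]
      have hsplit : |v * B - v * (((n:ℝ)+1)^(-β) * T)|
          ≤ |v| * |B| + |v| * (((n:ℝ)+1)^(-β) * T) := by
        have h1 : v * B - v * (((n:ℝ)+1)^(-β) * T) = v * (B - ((n:ℝ)+1)^(-β) * T) := by ring
        rw [h1, abs_mul]
        have h2 : |B - ((n:ℝ)+1)^(-β) * T| ≤ |B| + ((n:ℝ)+1)^(-β) * T := by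
          have hwtnn : 0 ≤ ((n:ℝ)+1)^(-β) * T := mul_nonneg (hwnn n) htail0
          rw [abs_sub_le_iff]
          constructor
          · linarith [le_abs_self B]
          · linarith [neg_abs_le B]
        calc |v| * |B - ((n:ℝ)+1)^(-β) * T| ≤ |v| * (|B| + ((n:ℝ)+1)^(-β) * T) :=
              mul_le_mul_of_nonneg_left h2 (abs_nonneg v)
          _ = |v| * |B| + |v| * (((n:ℝ)+1)^(-β) * T) := by ring
      have hBX : |B| ≤ (6 * c32 + 16) * X := hB
      calc |v * B - v * (((n:ℝ)+1)^(-β) * T)|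
          ≤ |v| * |B| + |v| * (((n:ℝ)+1)^(-β) * T) := hsplit
        _ ≤ |v| * ((6*c32+16) * X) + |v| * (c32 * X) := by
            refine add_le_add (mul_le_mul_of_nonneg_left hBX (abs_nonneg v))
              (mul_le_mul_of_nonneg_left hwt (abs_nonneg v))
        _ = D * X := by rw [hD]; ring
    · refine ((summable_shift (3/2) h32).mul_left (D^2)).congr fun n => ?_
      have hx : (0:ℝ) < (n:ℝ)+1 := by positivity
      have e2 : (((n:ℝ)+1)^(-(β+1/2)))^2 = ((n:ℝ)+1)^(2*(-(β+1/2))) := rpow_sq hx.le _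
      have e4 : ((n:ℝ)+1)^(2*(β-1/4)) * ((n:ℝ)+1)^(2*(-(β+1/2))) = ((n:ℝ)+1)^(-(3/2:ℝ)) := by
        rw [← Real.rpow_add hx]
        congr 1
        ring
      have e3 : (1+(n:ℝ)) = ((n:ℝ)+1) := by ring
      calc D^2 * ((n:ℝ)+1)^(-(3/2:ℝ))
          = D^2 * (((n:ℝ)+1)^(2*(β-1/4)) * ((n:ℝ)+1)^(2*(-(β+1/2)))) := by rw [e4]
        _ = (1+(n:ℝ))^(2*(β-1/4)) * (D * ((n:ℝ)+1)^(-(β+1/2)))^2 := by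
            rw [e3, mul_pow, e2]
            ring
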